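/- arXiv:1901.07302 — 4 statements merged into one kernel-verified Lean document; each statement's English description precedes it below -/
import Mathlib

section
/- Suppose l : [0,∞) → ℝ satisfies l(s) = 1 for 0 ≤ s ≤ h and l(s) = x(s-h) for s ≥ h, where x(s) = exp(-∑_{j=1}^m ζ_j⁻¹ ∫₀^s g_j(u) du) with each g_j nonnegative integrable and ζ_j > 0, h > 0. Then ∫₀^∞ l(s) ds = ∞. -/
open MeasureTheory Set Filter Real

theorem stmt2 (m : ℕ) (g : Fin m → ℝ → ℝ) (ζ : Fin m → ℝ) (h : ℝ)
    (hh : 0 < h)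
    (hg0 : ∀ j s, 0 ≤ s → 0 ≤ g j s)
    (hgint : ∀ j, IntegrableOn (g j) (Ici 0))
    (hζ : ∀ j, 0 < ζ j)
    (x l : ℝ → ℝ)
    (hx : ∀ s, x s = Real.exp (-(∑ j, (ζ j)⁻¹ * ∫ u in Set.Ioc 0 s, g j u)))
    (hl1 : ∀ s, 0 ≤ s → s ≤ h → l s = 1)
    (hl2 : ∀ s, h ≤ s → l s = x (s - h)) :
    ∫⁻ s in Set.Ioi (0 : ℝ), ENNReal.ofReal (l s) = ⊤ := by
  set C : ℝ := ∑ j, (ζ j)⁻¹ * ∫ u in Set.Ici (0:ℝ), g j u with hC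
  have key : ∀ s, h ≤ s → Real.exp (-C) ≤ l s := by
    intro s hs
    rw [hl2 s hs, hx]
    refine Real.exp_le_exp.2 (neg_le_neg ?_)
    refine Finset.sum_le_sum fun j _ => ?_
    refine mul_le_mul_of_nonneg_left ?_ (inv_nonneg.2 (hζ j).le)
    refine setIntegral_mono_set (hgint j) ?_ ?_
    · exact (ae_restrict_iff' measurableSet_Ici).2
        (Filter.Eventually.of_forall fun u hu => hg0 j u hu)
    · exact Filter.Eventually.of_forall fun u hu => le_of_lt hu.1
  have h1 : ∫⁻ s in Set.Ioi h, ENNReal.ofReal (l s) = ⊤ := by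
    have hle : ∫⁻ s in Set.Ioi h, ENNReal.ofReal (Real.exp (-C))
        ≤ ∫⁻ s in Set.Ioi h, ENNReal.ofReal (l s) := by
      refine lintegral_mono_ae ((ae_restrict_iff' measurableSet_Ioi).2
        (Filter.Eventually.of_forall fun s hs =>
          ENNReal.ofReal_le_ofReal (key s (le_of_lt hs))))
    have hconst : ∫⁻ _ in Set.Ioi h, ENNReal.ofReal (Real.exp (-C)) = ⊤ := by
      rw [lintegral_const, Measure.restrict_apply MeasurableSet.univ, Set.univ_inter,
        Real.volume_Ioi, ENNReal.mul_top]
      exact ne_of_gt (ENNReal.ofReal_pos.2 (Real.exp_pos _))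
    exact top_le_iff.1 (hconst ▸ hle)
  refine top_le_iff.1 ?_
  calc (⊤ : ENNReal) = ∫⁻ s in Set.Ioi h, ENNReal.ofReal (l s) := h1.symm
    _ ≤ ∫⁻ s in Set.Ioi (0:ℝ), ENNReal.ofReal (l s) :=
        lintegral_mono' (Measure.restrict_mono (Set.Ioi_subset_Ioi hh.le) le_rfl) le_rfl
end

section
/- Let x : [t₀,∞) → ℝ be a differentiable function with x(t) ≥ 0 satisfying the differential inequality x'(t) ≤ 1 - 2x(t)/(x(t) + c) for all t ≥ t₀, where c > 0. Then sup_{t ≥ t₀} x(t) ≤ max{c, x(t₀)}. -/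
open Set

theorem le_max_of_deriv_neg_of_lt {f : ℝ → ℝ} {a K : ℝ}
    (hf : ∀ t, a ≤ t → DifferentiableAt ℝ f t)
    (hneg : ∀ t, a ≤ t → K < f t → deriv f t < 0) {t : ℝ} (ht : a ≤ t) :
    f t ≤ max K (f a) := by
  refine le_of_forall_pos_le_add fun ε hε => ?_
  -- The margin `ε` puts every point where `f` touches the barrier strictly above `K`.
  have hbarrier : ∀ u ∈ Icc a t, f u ≤ max K (f a) + ε :=
    image_le_of_deriv_right_lt_deriv_boundary (f' := deriv f) (B' := fun _ => 0)
      (fun u hu => (hf u hu.1).continuousAt.continuousWithinAt)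
      (fun u hu => (hf u hu.1).hasDerivAt.hasDerivWithinAt)
      (by linarith [le_max_right K (f a)]) (fun _ => hasDerivAt_const _ _)
      (fun u hu hfu => hneg u hu.1 (by linarith [le_max_left K (f a)]))
  exact hbarrier t ⟨ht, le_rfl⟩

theorem one_sub_two_mul_div_add_neg {x c : ℝ} (hc : 0 < c) (hcx : c < x) :
    1 - 2 * x / (x + c) < 0 := by
  rw [sub_neg, lt_div_iff₀ (by linarith)]
  linarith

theorem stmt4_general (x : ℝ → ℝ) (t₀ c : ℝ)
    (hc : 0 < c)
    (hdiff : ∀ t, t₀ ≤ t → DifferentiableAt ℝ x t)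
    (hineq : ∀ t, t₀ ≤ t → deriv x t ≤ 1 - 2 * x t / (x t + c)) :
    ∀ t, t₀ ≤ t → x t ≤ max c (x t₀) := fun _ ht =>
  le_max_of_deriv_neg_of_lt hdiff
    (fun u hu hcu => (hineq u hu).trans_lt (one_sub_two_mul_div_add_neg hc hcu)) ht

theorem stmt4 (x : ℝ → ℝ) (t₀ c : ℝ)
    (hc : 0 < c)
    (hx0 : ∀ t, t₀ ≤ t → 0 ≤ x t)
    (hdiff : ∀ t, t₀ ≤ t → DifferentiableAt ℝ x t)
    (hineq : ∀ t, t₀ ≤ t → deriv x t ≤ 1 - 2 * x t / (x t + c)) :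
    ∀ t, t₀ ≤ t → x t ≤ max c (x t₀) :=
  stmt4_general x t₀ c hc hdiff hineq
end

section
/- Let x : [t₀,∞) → ℝ be differentiable, nonnegative, and satisfy x'(t) ≤ 1 - 2x(t)/l(t) where l(t) = x(t) + w(t) and 0 ≤ w(t) ≤ c for a constant c > 0. Then l(t) ≤ max{c, x(t₀)} + c for all t ≥ t₀, i.e. l is uniformly bounded. -/
open Set

theorem stmt5 (x w l : ℝ → ℝ) (t₀ c : ℝ)
    (hc : 0 < c)
    (hx0 : ∀ t, t₀ ≤ t → 0 ≤ x t)
    (hw : ∀ t, t₀ ≤ t → 0 ≤ w t ∧ w t ≤ c)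
    (hl : ∀ t, t₀ ≤ t → l t = x t + w t)
    (hdiff : ∀ t, t₀ ≤ t → DifferentiableAt ℝ x t)
    (hineq : ∀ t, t₀ ≤ t → deriv x t ≤ 1 - 2 * x t / l t) :
    ∀ t, t₀ ≤ t → l t ≤ max c (x t₀) + c := by
  set M := max c (x t₀) with hM
  -- derivative negative whenever x u > M (and u ≥ t₀)
  have hderiv_neg : ∀ u, t₀ ≤ u → M < x u → deriv x u < 0 := by
    intro u hu hxu
    have hcM : c ≤ M := le_max_left _ _
    have hxpos : 0 < x u := lt_of_le_of_lt (le_trans hc.le hcM) hxu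
    have hwu := hw u hu
    have hlu : l u = x u + w u := hl u hu
    have hlpos : 0 < l u := by rw [hlu]; linarith [hwu.1]
    have hl2x : l u < 2 * x u := by
      rw [hlu]; nlinarith [hwu.2]
    have h1 : 1 < 2 * x u / l u := by
      rw [lt_div_iff₀ hlpos]; linarith
    have := hineq u hu
    linarith
  -- main claim: x t ≤ M for all t ≥ t₀
  have hxle : ∀ t, t₀ ≤ t → x t ≤ M := by
    intro t₁ ht₁
    by_contra hgt
    push_neg at hgt
    have hx0M : x t₀ ≤ M := le_max_right _ _
    set S : Set ℝ := {s | s ∈ Icc t₀ t₁ ∧ x s ≤ M} with hS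
    have hne : S.Nonempty := ⟨t₀, ⟨le_refl _, ht₁⟩, hx0M⟩
    have hbdd : BddAbove S := ⟨t₁, fun s hs => hs.1.2⟩
    set s := sSup S with hs
    have hst₀ : t₀ ≤ s := le_csSup hbdd ⟨⟨le_refl _, ht₁⟩, hx0M⟩
    have hst₁ : s ≤ t₁ := csSup_le hne (fun u hu => hu.1.2)
    -- x s ≤ M by continuity
    have hxs : x s ≤ M := by
      by_contra hxsM
      push_neg at hxsM
      have hcont : ContinuousAt x s := (hdiff s hst₀).continuousAt
      have : ∀ᶠ u in nhds s, M < x u :=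
        hcont.eventually (eventually_gt_nhds hxsM)
      rcases Metric.eventually_nhds_iff.mp this with ⟨ε, hε, hball⟩
      obtain ⟨u, huS, hus⟩ := exists_lt_of_lt_csSup hne (show s - ε < s by linarith)
      have hule : u ≤ s := le_csSup hbdd huS
      have : M < x u := hball (by rw [Real.dist_eq, abs_lt]; constructor <;> linarith)
      exact absurd huS.2 (not_le.mpr this)
    have hslt : s < t₁ := lt_of_le_of_ne hst₁ (fun h => by rw [h] at hxs; linarith)
    -- on (s, t₁], x u > M
    have hgtM : ∀ u ∈ Ioc s t₁, M < x u := by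
      intro u ⟨hu1, hu2⟩
      by_contra hle
      push_neg at hle
      have : u ≤ s := le_csSup hbdd ⟨⟨le_trans hst₀ hu1.le, hu2⟩, hle⟩
      linarith
    -- x strictly decreasing on [s, t₁]
    have hanti : StrictAntiOn x (Icc s t₁) := by
      apply strictAntiOn_of_deriv_neg (convex_Icc s t₁)
      · intro u hu
        exact ((hdiff u (le_trans hst₀ hu.1)).continuousAt).continuousWithinAt
      · intro u hu
        rw [interior_Icc] at hu
        exact hderiv_neg u (le_trans hst₀ hu.1.le)
          (hgtM u ⟨hu.1, hu.2.le⟩)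
    have : x t₁ < x s := hanti ⟨le_refl _, hst₁⟩ ⟨hst₁, le_refl _⟩ hslt
    linarith
  intro t ht
  have := hxle t ht
  have hwt := hw t ht
  rw [hl t ht]
  linarith [hwt.2]
end

section
/- Let G : ℝ≥0 × ℝ≥0 → ℝ≥0 be continuous and suppose x satisfies ∂x/∂t + ∂x/∂s = -x(t,s)·G(t,s) with x(t,0)=1, x ≥ 0, and G(t,s) ≥ 2/l(t) where l(t) := ∫₀^{t-h} x(t,s) ds + w(t) with 0 ≤ w(t) ≤ mh. Then X(t) := ∫₀^{t-h} x(t,s) ds satisfies X'(t) ≤ 1 - 2X(t)/(X(t) + mh) for t ≥ 2h. -/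
/-!
By the Leibniz rule, `X'(t) = x(t, t - h) + ∫₀^{t-h} ∂ₜx(t, s) ds`. The transport equation turns
`∂ₜx` into `-x G - ∂ₛx`, and the integral of `∂ₛx` cancels the boundary term, leaving
`X'(t) = x(t, 0) - ∫₀^{t-h} x G = 1 - ∫₀^{t-h} x G`. Finally `G ≥ 2 / l` and `X ≤ l ≤ X + m h`
give `∫₀^{t-h} x G ≥ 2 X / l ≥ 2 X / (X + m h)`.
-/

open Set Function MeasureTheory intervalIntegral Asymptotics Topology

section Leibniz

variable {E : Type*} [NormedAddCommGroup E] [NormedSpace ℝ E] {f : ℝ → ℝ → E}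

theorem ContDiff.hasDerivAt_partial_fst (hf : ContDiff ℝ 1 (uncurry f)) (t s : ℝ) :
    HasDerivAt (fun τ => f τ s) (fderiv ℝ (uncurry f) (t, s) (1, 0)) t :=
  HasFDerivAt.comp_hasDerivAt (l := uncurry f) t (hf.differentiable one_ne_zero (t, s)).hasFDerivAt
    ((hasDerivAt_id t).prodMk (hasDerivAt_const t s))

theorem ContDiff.hasDerivAt_partial_snd (hf : ContDiff ℝ 1 (uncurry f)) (t s : ℝ) :
    HasDerivAt (f t) (fderiv ℝ (uncurry f) (t, s) (0, 1)) s :=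
  HasFDerivAt.comp_hasDerivAt (l := uncurry f) s (hf.differentiable one_ne_zero (t, s)).hasFDerivAt
    ((hasDerivAt_const s t).prodMk (hasDerivAt_id s))

theorem ContDiff.continuous_deriv_partial_fst (hf : ContDiff ℝ 1 (uncurry f)) :
    Continuous fun p : ℝ × ℝ => deriv (fun τ => f τ p.2) p.1 := by
  simp only [fun p : ℝ × ℝ => (hf.hasDerivAt_partial_fst p.1 p.2).deriv]
  exact (hf.continuous_fderiv one_ne_zero).clm_apply continuous_const

theorem ContDiff.continuous_deriv_partial_snd (hf : ContDiff ℝ 1 (uncurry f)) :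
    Continuous fun p : ℝ × ℝ => deriv (f p.1) p.2 := by
  simp only [fun p : ℝ × ℝ => (hf.hasDerivAt_partial_snd p.1 p.2).deriv]
  exact (hf.continuous_fderiv one_ne_zero).clm_apply continuous_const

theorem hasDerivAt_intervalIntegral_of_contDiff_uncurry (hf : ContDiff ℝ 1 (uncurry f))
    (a b t : ℝ) :
    HasDerivAt (fun τ => ∫ s in a..b, f τ s) (∫ s in a..b, deriv (fun τ => f τ s) t) t := by
  have hD := hf.continuous_deriv_partial_fst
  obtain ⟨C, hC⟩ := ((isCompact_closedBall t 1).prod isCompact_uIcc).exists_bound_of_continuousOn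
    (s := Metric.closedBall t 1 ×ˢ uIcc a b) hD.continuousOn
  exact (hasDerivAt_integral_of_dominated_loc_of_deriv_le (bound := fun _ => C)
    (F' := fun τ s => deriv (fun τ' => f τ' s) τ) (Metric.ball_mem_nhds t one_pos)
    (.of_forall fun τ => (hf.continuous.uncurry_left τ).aestronglyMeasurable)
    ((hf.continuous.uncurry_left t).intervalIntegrable _ _)
    (hD.comp (.prodMk_right t)).aestronglyMeasurable
    (.of_forall fun s hs τ hτ => hC (τ, s) ⟨Metric.ball_subset_closedBall hτ, uIoc_subset_uIcc hs⟩)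
    intervalIntegrable_const
    (.of_forall fun s _ τ _ => (hf.hasDerivAt_partial_fst τ s).differentiableAt.hasDerivAt)).2

variable [CompleteSpace E]

theorem hasDerivAt_integral_moving_upper (hf : Continuous (uncurry f))
    {u : ℝ → ℝ} {u' t : ℝ} (hu : HasDerivAt u u' t) :
    HasDerivAt (fun τ => ∫ s in u t..u τ, f τ s) (u' • f t (u t)) t := by
  set c := f t (u t)
  -- joint continuity at `(t, u t)` makes the integrand uniformly close to `c` on `[u t, u τ]`
  have hsmall : (fun τ => ∫ s in u t..u τ, (f τ s - c)) =o[𝓝 t] fun τ => u τ - u t := by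
    refine isLittleO_iff.2 fun ε hε => ?_
    obtain ⟨δ, hδ, hfδ⟩ := Metric.continuousAt_iff.1 hf.continuousAt ε hε
    filter_upwards [Metric.ball_mem_nhds t hδ,
      hu.continuousAt.preimage_mem_nhds (Metric.ball_mem_nhds (u t) hδ)] with τ hτ huτ
    refine intervalIntegral.norm_integral_le_of_norm_le_const fun s hs => ?_
    have hs' : dist s (u t) < δ :=
      (abs_sub_left_of_mem_uIcc (uIoc_subset_uIcc hs)).trans_lt huτ
    rw [← dist_eq_norm]
    exact (hfδ (max_lt (show dist τ t < δ from hτ) hs' : dist (τ, s) (t, u t) < δ)).le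
  have hzero : HasDerivAt (fun τ => ∫ s in u t..u τ, (f τ s - c)) 0 t := by
    rw [hasDerivAt_iff_isLittleO]
    simpa using hsmall.trans_isBigO hu.hasFDerivAt.isBigO_sub
  have hsplit : (fun τ => ∫ s in u t..u τ, f τ s)
      = fun τ => (∫ s in u t..u τ, (f τ s - c)) + (u τ - u t) • c := by
    funext τ
    rw [integral_sub ((hf.uncurry_left τ).intervalIntegrable _ _) intervalIntegrable_const,
      intervalIntegral.integral_const, sub_add_cancel]
  rw [hsplit]
  exact (hzero.add ((hu.sub_const (u t)).smul_const c)).congr_deriv (zero_add _)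

theorem hasDerivAt_integral_of_contDiff_uncurry (hf : ContDiff ℝ 1 (uncurry f)) (a : ℝ)
    {u : ℝ → ℝ} {u' t : ℝ} (hu : HasDerivAt u u' t) :
    HasDerivAt (fun τ => ∫ s in a..u τ, f τ s)
      ((∫ s in a..u t, deriv (fun τ => f τ s) t) + u' • f t (u t)) t := by
  have hsplit : (fun τ => ∫ s in a..u τ, f τ s)
      = fun τ => (∫ s in a..u t, f τ s) + ∫ s in u t..u τ, f τ s := by
    funext τ
    have hint := hf.continuous.uncurry_left τ
    rw [integral_add_adjacent_intervals (hint.intervalIntegrable _ _) (hint.intervalIntegrable _ _)]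
  rw [hsplit]
  exact (hasDerivAt_intervalIntegral_of_contDiff_uncurry hf a (u t) t).add
    (hasDerivAt_integral_moving_upper hf.continuous hu)

end Leibniz

section Transport

variable {x G : ℝ → ℝ → ℝ}

theorem continuous_mul_of_transport (hx : ContDiff ℝ 1 (uncurry x))
    (hpde : ∀ t s, deriv (fun τ => x τ s) t + deriv (fun σ => x t σ) s = -(x t s * G t s))
    (t : ℝ) : Continuous fun s => x t s * G t s := by
  have hsum : Continuous fun s => deriv (fun τ => x τ s) t + deriv (fun σ => x t σ) s :=
    (hx.continuous_deriv_partial_fst.add hx.continuous_deriv_partial_snd).comp (.prodMk_right t)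
  simp only [hpde] at hsum
  exact continuous_neg_iff.mp hsum

theorem hasDerivAt_integral_of_transport (hx : ContDiff ℝ 1 (uncurry x))
    (hpde : ∀ t s, deriv (fun τ => x τ s) t + deriv (fun σ => x t σ) s = -(x t s * G t s))
    (a h t : ℝ) :
    HasDerivAt (fun τ => ∫ s in a..(τ - h), x τ s)
      (x t a - ∫ s in a..(t - h), x t s * G t s) t := by
  have hleibniz := hasDerivAt_integral_of_contDiff_uncurry hx a ((hasDerivAt_id' t).sub_const h)
  have htime : ∀ s, deriv (fun τ => x τ s) t = -(x t s * G t s + deriv (x t) s) :=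
    fun s => by linarith [hpde t s]
  have hspace : Continuous (deriv (x t)) :=
    hx.continuous_deriv_partial_snd.comp (.prodMk_right t)
  have hboundary : ∫ s in a..(t - h), deriv (x t) s = x t (t - h) - x t a :=
    integral_eq_sub_of_hasDerivAt
      (fun s _ => (hx.hasDerivAt_partial_snd t s).differentiableAt.hasDerivAt)
      (hspace.intervalIntegrable _ _)
  refine hleibniz.congr_deriv ?_
  simp only [htime]
  rw [intervalIntegral.integral_neg,
    integral_add ((continuous_mul_of_transport hx hpde t).intervalIntegrable _ _)
      (hspace.intervalIntegrable _ _), hboundary, one_smul]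
  ring

end Transport

theorem stmt17_general (m : ℕ) (h : ℝ) (hh : 0 < h)
    (G x : ℝ → ℝ → ℝ) (w l : ℝ → ℝ)
    (hsmooth : ContDiff ℝ 1 (fun p : ℝ × ℝ => x p.1 p.2))
    (hx0 : ∀ t s, 0 ≤ x t s)
    (hbc : ∀ t, x t 0 = 1)
    (hw : ∀ t, 0 ≤ w t ∧ w t ≤ m * h)
    (hl : ∀ t, l t = (∫ s in (0:ℝ)..(t - h), x t s) + w t)
    (hGl : ∀ t s, 2 / l t ≤ G t s)
    (hpde : ∀ t s, deriv (fun τ => x τ s) t + deriv (fun σ => x t σ) s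
        = -(x t s * G t s)) :
    ∀ t, 2 * h ≤ t →
      deriv (fun τ => ∫ s in (0:ℝ)..(τ - h), x τ s) t ≤
        1 - 2 * (∫ s in (0:ℝ)..(t - h), x t s) /
          ((∫ s in (0:ℝ)..(t - h), x t s) + m * h) := by
  intro t ht
  rw [(hasDerivAt_integral_of_transport hsmooth hpde 0 h t).deriv, hbc]
  set X := ∫ s in (0:ℝ)..(t - h), x t s
  have hb : 0 ≤ t - h := by linarith
  have hX : 0 ≤ X := integral_nonneg hb fun s _ => hx0 t s
  have hloss : 2 / l t * X ≤ ∫ s in (0:ℝ)..(t - h), x t s * G t s := by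
    rw [← intervalIntegral.integral_const_mul]
    refine integral_mono_on hb
      ((continuous_const.mul (hsmooth.continuous.uncurry_left t)).intervalIntegrable _ _)
      ((continuous_mul_of_transport hsmooth hpde t).intervalIntegrable _ _) fun s _ => ?_
    rw [mul_comm]
    exact mul_le_mul_of_nonneg_left (hGl t s) (hx0 t s)
  have hratio : 2 * X / (X + m * h) ≤ 2 / l t * X := by
    have hXl : X ≤ l t := by linarith [hl t, (hw t).1]
    have hlM : l t ≤ X + m * h := by linarith [hl t, (hw t).2]
    rcases hX.eq_or_lt with hX0 | hXpos
    · simp [← hX0]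
    · rw [div_mul_eq_mul_div]
      exact div_le_div_of_nonneg_left (by positivity) (hXpos.trans_le hXl) hlM
  linarith

theorem stmt17 (m : ℕ) (h : ℝ) (hm : 2 ≤ m) (hh : 0 < h)
    (G x : ℝ → ℝ → ℝ) (w l : ℝ → ℝ)
    (hGc : Continuous (fun p : ℝ × ℝ => G p.1 p.2))
    (hG0 : ∀ t s, 0 ≤ G t s)
    (hsmooth : ContDiff ℝ 1 (fun p : ℝ × ℝ => x p.1 p.2))
    (hx0 : ∀ t s, 0 ≤ x t s)
    (hbc : ∀ t, x t 0 = 1)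
    (hw : ∀ t, 0 ≤ w t ∧ w t ≤ m * h)
    (hl : ∀ t, l t = (∫ s in (0:ℝ)..(t - h), x t s) + w t)
    (hGl : ∀ t s, 2 / l t ≤ G t s)
    (hpde : ∀ t s, deriv (fun τ => x τ s) t + deriv (fun σ => x t σ) s
        = -(x t s * G t s)) :
    ∀ t, 2 * h ≤ t →
      deriv (fun τ => ∫ s in (0:ℝ)..(τ - h), x τ s) t ≤
        1 - 2 * (∫ s in (0:ℝ)..(t - h), x t s) /
          ((∫ s in (0:ℝ)..(t - h), x t s) + m * h) :=
  stmt17_general m h hh G x w l hsmooth hx0 hbc hw hl hGl hpde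
end
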